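/- Let ν > 0, m ∈ ℝ, s² > 0. Then the differential entropy of the location-scale Student-t density satisfies: −∫_ℝ T(y; ν, m, s²) · ln T(y; ν, m, s²) dy = ((ν+1)/2)·(ψ((ν+1)/2) − ψ(ν/2)) + ln(√ν · B(ν/2, 1/2)) + (1/2)·ln(s²). -/

import Mathlib

open Real MeasureTheory Matrix

/-- Univariate Gaussian density `N(y; m, v)` with mean `m`, variance `v`. -/
noncomputable def gauss1 (y m v : ℝ) : ℝ :=
  (2 * π * v) ^ (-(1 : ℝ) / 2) * Real.exp (-((y - m) ^ 2) / (2 * v))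

/-- Multivariate Gaussian density in precision form: `N(θ; μ, P⁻¹)` with precision matrix `P`. -/
noncomputable def gaussND {ι : Type*} [Fintype ι] [DecidableEq ι]
    (θ μ : ι → ℝ) (P : Matrix ι ι ℝ) : ℝ :=
  (2 * π) ^ (-(Fintype.card ι : ℝ) / 2) * P.det ^ ((1 : ℝ) / 2) *
    Real.exp (-(1 / 2) * ((θ - μ) ⬝ᵥ (P *ᵥ (θ - μ))))

/-- Gamma density `G(τ; α, β)` with shape `α` and rate `β`. -/
noncomputable def gammaPdf (τ α β : ℝ) : ℝ :=
  β ^ α / Real.Gamma α * τ ^ (α - 1) * Real.exp (-β * τ)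

/-- Normal-Gamma density `NG(θ, τ; μ, Λ, α, β) = N(θ; μ, (τΛ)⁻¹) · G(τ; α, β)`. -/
noncomputable def normalGamma {ι : Type*} [Fintype ι] [DecidableEq ι]
    (θ : ι → ℝ) (τ : ℝ) (μ : ι → ℝ) (Λ : Matrix ι ι ℝ) (α β : ℝ) : ℝ :=
  gaussND θ μ (τ • Λ) * gammaPdf τ α β

/-- Location-scale Student-t density `T(y; ν, m, s²)`. -/
noncomputable def studentT (y ν m s2 : ℝ) : ℝ :=
  Real.Gamma ((ν + 1) / 2) / (Real.sqrt (π * ν * s2) * Real.Gamma (ν / 2)) *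
    (1 + (y - m) ^ 2 / (ν * s2)) ^ (-((ν + 1) / 2))

/-- Multivariate location-scale Student-t density `T_D(θ; ν, μ, Σ)`. -/
noncomputable def multiStudentT {ι : Type*} [Fintype ι] [DecidableEq ι]
    (θ : ι → ℝ) (ν : ℝ) (μ : ι → ℝ) (S : Matrix ι ι ℝ) : ℝ :=
  Real.Gamma ((ν + Fintype.card ι) / 2) /
      (Real.Gamma (ν / 2) * (ν * π) ^ ((Fintype.card ι : ℝ) / 2) * S.det ^ ((1 : ℝ) / 2)) *
    (1 + (θ - μ) ⬝ᵥ (S⁻¹ *ᵥ (θ - μ)) / ν) ^ (-((ν + Fintype.card ι) / 2))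

/-- The digamma function: the derivative of `ln ∘ Γ`. -/
noncomputable def digamma (x : ℝ) : ℝ := deriv (fun t => Real.log (Real.Gamma t)) x

/-- The Beta function `B(a, b) = Γ(a)Γ(b)/Γ(a+b)`. -/
noncomputable def betaFn (a b : ℝ) : ℝ := Real.Gamma a * Real.Gamma b / Real.Gamma (a + b)

/-! With `a = √(ν s²)` and `p = (ν + 1) / 2`, the density is `(a Z)⁻¹ k ((y - m) / a)` for the
kernel `k u = (1 + u²)^(-p)` with `Z = ∫ k`. The substitution `x = (1 + u²)⁻¹` turns `Z` into the
Beta integral `B(p - 1/2, 1/2)`, so `Z = √π Γ(p - 1/2) / Γ(p)`. The entropy of a location-scale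
density is `log (a Z) - (∫ k log k) / Z`, and `∫ k log (1 + u²) = -Z'(p)` is obtained by
differentiating under the integral sign in `p`; differentiating the Gamma quotient instead gives
`Z'(p) = Z (ψ(p - 1/2) - ψ(p))`. -/

open Set Filter Topology

lemma integral_rpow_mul_one_sub_rpow {a b : ℝ} (ha : 0 < a) (hb : 0 < b) :
    ∫ x in (0 : ℝ)..1, x ^ (a - 1) * (1 - x) ^ (b - 1) = Gamma a * Gamma b / Gamma (a + b) := by
  have h := Complex.betaIntegral_eq_Gamma_mul_div a b (by simpa) (by simpa)
  rw [← Complex.ofReal_add, Complex.Gamma_ofReal, Complex.Gamma_ofReal, Complex.Gamma_ofReal,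
    Complex.betaIntegral] at h
  apply Complex.ofReal_injective
  push_cast
  rw [← h, ← intervalIntegral.integral_ofReal]
  refine intervalIntegral.integral_congr fun x hx => ?_
  rw [uIcc_of_le zero_le_one] at hx
  push_cast
  rw [Complex.ofReal_cpow hx.1, Complex.ofReal_cpow (by linarith [hx.2])]
  push_cast
  ring_nf

lemma image_inv_one_add_sq_Ioi : (fun u : ℝ => (1 + u ^ 2)⁻¹) '' Ioi 0 = Ioo 0 1 := by
  ext y
  constructor
  · rintro ⟨u, hu, rfl⟩
    have : (1 : ℝ) < 1 + u ^ 2 := by have := mem_Ioi.mp hu; nlinarith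
    exact ⟨by positivity, inv_lt_one_of_one_lt₀ this⟩
  · rintro ⟨hy0, hy1⟩
    have hy : 1 < y⁻¹ := (one_lt_inv₀ hy0).mpr hy1
    refine ⟨√(y⁻¹ - 1), sqrt_pos.mpr (by linarith), ?_⟩
    simp only
    rw [sq_sqrt (by linarith), add_sub_cancel, inv_inv]

lemma strictAntiOn_inv_one_add_sq : StrictAntiOn (fun u : ℝ => (1 + u ^ 2)⁻¹) (Ioi 0) :=
  fun u hu v _ huv => by
    have := mem_Ioi.mp hu
    simp only
    gcongr

lemma abs_deriv_smul_beta_integrand_inv_one_add_sq {p u : ℝ} (hu : 0 < u) :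
    |-(2 * u) / (1 + u ^ 2) ^ 2| •
        ((1 + u ^ 2)⁻¹ ^ (p - 1 / 2 - 1) * (1 - (1 + u ^ 2)⁻¹) ^ ((1 : ℝ) / 2 - 1)) =
      2 * (1 + u ^ 2) ^ (-p) := by
  set B := 1 + u ^ 2
  have hB : 0 < B := by positivity
  have hsub : 1 - B⁻¹ = u ^ 2 * B⁻¹ := by field_simp; simp only [B]; ring
  have hu2 : (u ^ 2) ^ ((1 : ℝ) / 2 - 1) = u⁻¹ := by
    rw [← rpow_natCast, ← rpow_mul hu.le]; norm_num [rpow_neg_one]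
  rw [smul_eq_mul, hsub, mul_rpow (by positivity) (by positivity), hu2, abs_div, abs_neg,
    abs_of_pos (by positivity), abs_of_pos (by positivity), rpow_neg hB.le, ← inv_rpow hB.le]
  have hsplit : B⁻¹ ^ p = B⁻¹ ^ (p - 1 / 2 - 1) * B⁻¹ ^ ((1 : ℝ) / 2 - 1) * (B ^ 2)⁻¹ := by
    rw [← inv_pow, ← rpow_natCast, ← rpow_add (by positivity), ← rpow_add (by positivity)]
    ring_nf
  rw [hsplit]
  field_simp

lemma integral_one_add_sq_rpow_neg {p : ℝ} (hp : 1 / 2 < p) :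
    ∫ u : ℝ, (1 + u ^ 2) ^ (-p) = √π * Gamma (p - 1 / 2) / Gamma p := by
  have hderiv : ∀ u ∈ Ioi (0 : ℝ), HasDerivWithinAt (fun u : ℝ => (1 + u ^ 2)⁻¹)
      (-(2 * u) / (1 + u ^ 2) ^ 2) (Ioi 0) u := fun u _ =>
    (((hasDerivAt_pow 2 u).const_add 1).inv (by positivity)).hasDerivWithinAt.congr_deriv
      (by norm_num)
  have hsubst := integral_image_eq_integral_abs_deriv_smul measurableSet_Ioi hderiv
    strictAntiOn_inv_one_add_sq.injOn fun x => x ^ (p - 1 / 2 - 1) * (1 - x) ^ ((1 : ℝ) / 2 - 1)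
  rw [image_inv_one_add_sq_Ioi, setIntegral_congr_fun measurableSet_Ioi
    fun u hu => abs_deriv_smul_beta_integrand_inv_one_add_sq hu, integral_const_mul] at hsubst
  have hbeta := integral_rpow_mul_one_sub_rpow (a := p - 1 / 2) (b := 1 / 2) (by linarith)
    one_half_pos
  rw [intervalIntegral.integral_of_le zero_le_one, integral_Ioc_eq_integral_Ioo, hsubst,
    Gamma_one_half_eq, sub_add_cancel] at hbeta
  have heven : ∫ u : ℝ, (1 + u ^ 2) ^ (-p) = 2 * ∫ u in Ioi 0, (1 + u ^ 2) ^ (-p) := by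
    have := integral_comp_abs (f := fun u => (1 + u ^ 2) ^ (-p))
    simp only [sq_abs] at this
    exact this
  rw [heven, hbeta]
  ring

lemma integrable_one_add_sq_rpow_neg {p : ℝ} (hp : 1 / 2 < p) :
    Integrable fun u : ℝ => (1 + u ^ 2) ^ (-p) := by
  have := integrable_rpow_neg_one_add_norm_sq (E := ℝ) (μ := volume) (r := 2 * p)
    (by simp only [Module.finrank_self, Nat.cast_one]; linarith)
  simpa [sq_abs, neg_div] using this

lemma integrable_one_add_sq_rpow_neg_mul_log {p : ℝ} (hp : 1 / 2 < p) :
    Integrable fun u : ℝ => (1 + u ^ 2) ^ (-p) * log (1 + u ^ 2) := by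
  set ε := (p - 1 / 2) / 2
  have hε : 0 < ε := by simp only [ε]; linarith
  refine ((integrable_one_add_sq_rpow_neg (p := p - ε) (by simp only [ε]; linarith)).const_mul
    ε⁻¹).mono' (by fun_prop : Measurable _).aestronglyMeasurable
    (Eventually.of_forall fun u => ?_)
  have hB : 0 < 1 + u ^ 2 := by positivity
  have hlog : 0 ≤ log (1 + u ^ 2) := log_nonneg (by nlinarith)
  rw [norm_of_nonneg (by positivity)]
  calc (1 + u ^ 2) ^ (-p) * log (1 + u ^ 2)
      ≤ (1 + u ^ 2) ^ (-p) * ((1 + u ^ 2) ^ ε / ε) := by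
        gcongr; exact log_le_rpow_div hB.le hε
    _ = ε⁻¹ * (1 + u ^ 2) ^ (-(p - ε)) := by
        rw [show -(p - ε) = -p + ε by ring, rpow_add hB]; ring

lemma hasDerivAt_const_rpow_neg {B : ℝ} (hB : 0 < B) (q : ℝ) :
    HasDerivAt (fun q => B ^ (-q)) (-(B ^ (-q) * log B)) q :=
  ((hasDerivAt_neg q).const_rpow hB).congr_deriv (by ring)

lemma hasDerivAt_integral_one_add_sq_rpow_neg {p : ℝ} (hp : 1 / 2 < p) :
    HasDerivAt (fun q => ∫ u : ℝ, (1 + u ^ 2) ^ (-q))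
      (-∫ u : ℝ, (1 + u ^ 2) ^ (-p) * log (1 + u ^ 2)) p := by
  set ε := (p - 1 / 2) / 2
  have hε : 0 < ε := by simp only [ε]; linarith
  rw [← integral_neg]
  refine (hasDerivAt_integral_of_dominated_loc_of_deriv_le (Metric.ball_mem_nhds p hε)
    (Eventually.of_forall fun q => (by fun_prop : Measurable _).aestronglyMeasurable)
    (integrable_one_add_sq_rpow_neg hp) (by fun_prop : Measurable _).aestronglyMeasurable ?_
    (integrable_one_add_sq_rpow_neg_mul_log (p := p - ε) (by simp only [ε]; linarith))
    (Eventually.of_forall fun u q _ => hasDerivAt_const_rpow_neg (by positivity) q)).2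
  refine Eventually.of_forall fun u q hq => ?_
  have hB : 1 ≤ 1 + u ^ 2 := by nlinarith
  rw [norm_neg, norm_of_nonneg (by have := log_nonneg hB; positivity)]
  have hq := (abs_lt.mp (Metric.mem_ball.mp hq)).1
  gcongr
  · exact log_nonneg hB
  · linarith

lemma hasDerivAt_Gamma_mul_digamma {x : ℝ} (hx : 0 < x) :
    HasDerivAt Gamma (Gamma x * digamma x) x := by
  have hd : DifferentiableAt ℝ Gamma x :=
    differentiableAt_Gamma fun m hm => by linarith [hm ▸ hx, (m.cast_nonneg : (0 : ℝ) ≤ m)]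
  have hψ : digamma x = deriv Gamma x / Gamma x :=
    (hd.hasDerivAt.log (Gamma_pos_of_pos hx).ne').deriv
  rw [hψ, mul_div_cancel₀ _ (Gamma_pos_of_pos hx).ne']
  exact hd.hasDerivAt

lemma integral_one_add_sq_rpow_neg_mul_log {p : ℝ} (hp : 1 / 2 < p) :
    ∫ u : ℝ, (1 + u ^ 2) ^ (-p) * log (1 + u ^ 2) =
      √π * Gamma (p - 1 / 2) / Gamma p * (digamma p - digamma (p - 1 / 2)) := by
  have hΓ : HasDerivAt (fun q => √π * Gamma (q - 1 / 2) / Gamma q)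
      (√π * Gamma (p - 1 / 2) / Gamma p * (digamma (p - 1 / 2) - digamma p)) p := by
    have h₁ := (hasDerivAt_Gamma_mul_digamma (x := p - 1 / 2) (by linarith)).comp_sub_const p
      (1 / 2)
    have h₂ := hasDerivAt_Gamma_mul_digamma (x := p) (by linarith)
    refine ((h₁.const_mul √π).div h₂ (Gamma_pos_of_pos (by linarith)).ne').congr_deriv ?_
    field_simp
  have heq : (fun q => ∫ u : ℝ, (1 + u ^ 2) ^ (-q)) =ᶠ[𝓝 p]
      fun q => √π * Gamma (q - 1 / 2) / Gamma q :=
    (eventually_gt_nhds hp).mono fun q hq => integral_one_add_sq_rpow_neg hq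
  have := (hasDerivAt_integral_one_add_sq_rpow_neg hp).unique (hΓ.congr_of_eventuallyEq heq)
  linear_combination -this

lemma integral_comp_sub_div {E : Type*} [NormedAddCommGroup E] [NormedSpace ℝ E]
    (g : ℝ → E) (m : ℝ) {a : ℝ} (ha : 0 < a) :
    ∫ y, g ((y - m) / a) = a • ∫ u, g u := by
  rw [integral_sub_right_eq_self (fun z => g (z / a)) m, Measure.integral_comp_div,
    abs_of_pos ha]

lemma neg_integral_mul_log_comp_sub_div {k : ℝ → ℝ} (hk_pos : ∀ u, 0 < k u) (hk : Integrable k)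
    (hk_log : Integrable fun u => k u * log (k u)) (m : ℝ) {a : ℝ} (ha : 0 < a) :
    -∫ y, (a * ∫ u, k u)⁻¹ * k ((y - m) / a) * log ((a * ∫ u, k u)⁻¹ * k ((y - m) / a)) =
      log (a * ∫ u, k u) - (∫ u, k u * log (k u)) / ∫ u, k u := by
  set Z := ∫ u, k u with hZ_def
  have hZ : 0 < Z := by
    rw [integral_pos_iff_support_of_nonneg (fun u => (hk_pos u).le) hk,
      (Function.support_eq_univ fun u => (hk_pos u).ne'), Measure.measure_univ_pos]
    exact NeZero.ne volume
  set c := (a * Z)⁻¹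
  have hsplit : ∀ y, c * k ((y - m) / a) * log (c * k ((y - m) / a)) =
      log c * c * k ((y - m) / a) + c * (k ((y - m) / a) * log (k ((y - m) / a))) := fun y => by
    rw [log_mul (by positivity) (hk_pos _).ne']
    ring
  simp_rw [hsplit]
  rw [integral_add (((hk.comp_div ha.ne').comp_sub_right m).const_mul _)
      (((hk_log.comp_div ha.ne').comp_sub_right m).const_mul _), integral_const_mul,
    integral_const_mul, integral_comp_sub_div (fun u => k u) m ha,
    integral_comp_sub_div (fun u => k u * log (k u)) m ha, log_inv, ← hZ_def]
  simp only [c, smul_eq_mul]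
  field_simp
  ring

lemma studentT_eq_inv_mul_kernel (y ν m s2 : ℝ) (hν : 0 < ν) (hs2 : 0 < s2) :
    studentT y ν m s2 = (√(ν * s2) * (√π * Gamma (ν / 2) / Gamma ((ν + 1) / 2)))⁻¹ *
      (1 + ((y - m) / √(ν * s2)) ^ 2) ^ (-((ν + 1) / 2)) := by
  rw [studentT, div_pow, sq_sqrt (by positivity), mul_assoc π, sqrt_mul pi_pos.le]
  field_simp

/-- the differential entropy of the location-scale Student-t density. -/
theorem studentT_entropy (ν m s2 : ℝ) (hν : 0 < ν) (hs2 : 0 < s2) :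
    -∫ y : ℝ, studentT y ν m s2 * Real.log (studentT y ν m s2) =
      ((ν + 1) / 2) * (digamma ((ν + 1) / 2) - digamma (ν / 2)) +
        Real.log (Real.sqrt ν * betaFn (ν / 2) (1 / 2)) + (1 / 2) * Real.log s2 := by
  set p := (ν + 1) / 2 with hp_def
  have hp : 1 / 2 < p := by rw [hp_def]; linarith
  have hp_half : p - 1 / 2 = ν / 2 := by ring
  set a := √(ν * s2)
  have ha : 0 < a := by positivity
  set k : ℝ → ℝ := fun u => (1 + u ^ 2) ^ (-p)
  have hZ : ∫ u, k u = √π * Gamma (ν / 2) / Gamma p := by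
    rw [integral_one_add_sq_rpow_neg hp, hp_half]
  have hT : ∀ y, studentT y ν m s2 = (a * ∫ u, k u)⁻¹ * k ((y - m) / a) := fun y => by
    rw [hZ]
    exact studentT_eq_inv_mul_kernel y ν m s2 hν hs2
  have hk_log : ∀ u, k u * log (k u) = -p * ((1 + u ^ 2) ^ (-p) * log (1 + u ^ 2)) := fun u => by
    rw [log_rpow (by positivity)]
    ring
  have hZ_eq : a * (√π * Gamma (ν / 2) / Gamma p) = √ν * betaFn (ν / 2) (1 / 2) * √s2 := by
    rw [betaFn, Gamma_one_half_eq, show ν / 2 + 1 / 2 = p by ring,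
      show a = √ν * √s2 from sqrt_mul hν.le s2]
    field_simp
  have hk_log_int : Integrable fun u => k u * log (k u) :=
    ((integrable_one_add_sq_rpow_neg_mul_log hp).const_mul (-p)).congr
      (Eventually.of_forall fun u => (hk_log u).symm)
  have hβ : 0 < betaFn (ν / 2) (1 / 2) := by unfold betaFn; positivity
  simp_rw [hT]
  rw [neg_integral_mul_log_comp_sub_div (fun u => by positivity)
      (integrable_one_add_sq_rpow_neg hp) hk_log_int m ha,
    integral_congr_ae (Eventually.of_forall hk_log), integral_const_mul,
    integral_one_add_sq_rpow_neg_mul_log hp, hZ, hZ_eq, log_mul (by positivity) (by positivity),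
    log_sqrt hs2.le, hp_half]
  field_simp
  ring
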